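/- Let V = U ⊕ W be a Lagrangian decomposition with respect to a non-degenerate symmetric bilinear form F, and t ∈ U ⊗ U with associated subspace W_t = { w + f_t(w) | w ∈ W }. Then W_t is Lagrangian (W_t = W_t^⊥) if and only if t is skew-symmetric, i.e., t ∈ Λ²U (equivalently t + t^{21} = 0). -/

import Mathlib

/-!
Write `g w = w + f_t w`. Since `U` and `W` are isotropic and `F` is symmetric,
`F (g w) (g w') = F (w, f_{t + t²¹} w')`, so `W_t` is isotropic iff `f_{t + t²¹}` vanishes.
The map `t ↦ f_t` is injective: `u ↦ F(·, u)|_W` is injective on `U` (an element of `U`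
orthogonal to `W` is orthogonal to `U + W = V`), `- ⊗ U` preserves injectivity over a field, and
`W* ⊗ U → Hom(W, U)` is injective. Finally an isotropic `W_t` is Lagrangian: `W_t` is a
complement of `U` while `W_t^⊥ ∩ U = 0`, so the modular law forces `W_t^⊥ = W_t`.
-/

open TensorProduct

/-- The linear map `j : U ⊗ U → Hom(W, U)` sending `t = Σ aᵢ ⊗ bᵢ` to `w ↦ Σ F(w, aᵢ) bᵢ`. -/
noncomputable def tensorToHom
    {k V : Type*} [Field k] [AddCommGroup V] [Module k V]
    (F : LinearMap.BilinForm k V) (U W : Submodule k V) :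
    (U ⊗[k] U) →ₗ[k] (W →ₗ[k] U) :=
  (dualTensorHom k W U).comp
    (TensorProduct.map
      ((LinearMap.lcomp k k W.subtype).comp ((LinearMap.flip F).comp U.subtype)) LinearMap.id)

/-- The graph subspace `W_t = { w + f_t(w) | w ∈ W }`. -/
noncomputable def graphSubspace
    {k V : Type*} [Field k] [AddCommGroup V] [Module k V]
    (F : LinearMap.BilinForm k V) (U W : Submodule k V) (t : U ⊗[k] U) :
    Submodule k V :=
  LinearMap.range (W.subtype + U.subtype.comp (tensorToHom F U W t))

open Function LinearMap Module in
theorem dualTensorHom_injective_of_projective {R M N : Type*} [CommRing R]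
    [AddCommGroup M] [Module R M] [AddCommGroup N] [Module R N] [Projective R N] :
    Injective (dualTensorHom R M N) := by
  classical
  obtain ⟨s, hs⟩ := projective_def'.mp ‹Projective R N›
  have hfree : Injective (dualTensorHom R M (N →₀ R)) := by
    have hR : Injective (dualTensorHom R M R) := by
      rw [dualTensorHom_self_right]; exact LinearEquiv.injective _
    rw [dualTensorHom_finsupp, coe_comp, coe_comp]
    exact (finsuppLinearMap_injective ..).comp
      ((Finsupp.mapRange_injective _ (map_zero _) hR).comp (LinearEquiv.injective _))
  refine .of_comp (f := s.compRight R) ?_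
  rw [← coe_comp, ← dualTensorHom_comp_lTensor]
  refine hfree.comp (injective_of_comp_eq_id _ ((Finsupp.linearCombination R id).lTensor _) ?_)
  rw [← lTensor_comp, hs, lTensor_id]

section

variable {k V : Type*} [Field k] [AddCommGroup V] [Module k V]
  {F : LinearMap.BilinForm k V} {U W : Submodule k V}

theorem disjoint_orthogonal_of_sup_eq_top (hnd : LinearMap.SeparatingRight F) (hUW : U ⊔ W = ⊤)
    (hU : ∀ u ∈ U, ∀ u' ∈ U, F u u' = 0) : Disjoint U (F.orthogonal W) := by
  refine Submodule.disjoint_def.mpr fun u hu huW => hnd u fun v => ?_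
  obtain ⟨x, hx, y, hy, rfl⟩ := Submodule.mem_sup.mp (hUW ▸ Submodule.mem_top : v ∈ U ⊔ W)
  rw [map_add, LinearMap.add_apply, hU x hx u hu, huW y hy, add_zero]

@[simp]
theorem tensorToHom_tmul (a b : U) (w : W) : tensorToHom F U W (a ⊗ₜ b) w = F w a • b := by
  simp [tensorToHom]

theorem apply_tensorToHom_comm (t : U ⊗[k] U) (w w' : W) :
    F w' (tensorToHom F U W t w) = F w (tensorToHom F U W (TensorProduct.comm k U U t) w') := by
  induction t using TensorProduct.induction_on with
  | zero => simp
  | tmul a b => simp [mul_comm]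
  | add x y hx hy => simp only [map_add, LinearMap.add_apply, Submodule.coe_add, hx, hy]

theorem tensorToHom_injective (hnd : LinearMap.SeparatingRight F) (hUW : U ⊔ W = ⊤)
    (hU : ∀ u ∈ U, ∀ u' ∈ U, F u u' = 0) : Function.Injective (tensorToHom F U W) := by
  have hpair : Function.Injective
      (LinearMap.lcomp k k W.subtype ∘ₗ F.flip ∘ₗ U.subtype : U →ₗ[k] Module.Dual k W) := by
    refine (injective_iff_map_eq_zero _).mpr fun u hu => Subtype.ext ?_
    exact Submodule.disjoint_def.mp (disjoint_orthogonal_of_sup_eq_top hnd hUW hU) u u.2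
      fun w hw => LinearMap.congr_fun hu ⟨w, hw⟩
  exact dualTensorHom_injective_of_projective.comp
    (Module.Flat.rTensor_preserves_injective_linearMap _ hpair)

theorem forall_apply_tensorToHom_eq_zero_iff (hnd : LinearMap.SeparatingRight F)
    (hUW : U ⊔ W = ⊤) (hU : ∀ u ∈ U, ∀ u' ∈ U, F u u' = 0) (s : U ⊗[k] U) :
    (∀ w w' : W, F w (tensorToHom F U W s w') = 0) ↔ s = 0 := by
  refine ⟨fun h => tensorToHom_injective hnd hUW hU ?_, by rintro rfl; simp⟩
  ext w' : 2
  simpa using Submodule.disjoint_def.mp (disjoint_orthogonal_of_sup_eq_top hnd hUW hU) _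
    (tensorToHom F U W s w').2 fun w hw => h ⟨w, hw⟩ w'

theorem apply_add_tensorToHom (hsymm : F.IsSymm) (hU : ∀ u ∈ U, ∀ u' ∈ U, F u u' = 0)
    (hW : ∀ w ∈ W, ∀ w' ∈ W, F w w' = 0) (t : U ⊗[k] U) (w w' : W) :
    F (w + tensorToHom F U W t w) (w' + tensorToHom F U W t w') =
      F w (tensorToHom F U W (t + TensorProduct.comm k U U t) w') := by
  have hUU := hU _ (tensorToHom F U W t w).2 _ (tensorToHom F U W t w').2
  rw [map_add, map_add, LinearMap.add_apply, LinearMap.add_apply, hW _ w.2 _ w'.2, hUU,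
    hsymm.eq, apply_tensorToHom_comm, map_add, LinearMap.add_apply, Submodule.coe_add, map_add]
  ring

def internalGraph (φ : W →ₗ[k] U) : Submodule k V :=
  LinearMap.range (W.subtype + U.subtype ∘ₗ φ)

theorem internalGraph_sup_eq_top (hUW : U ⊔ W = ⊤) (φ : W →ₗ[k] U) : internalGraph φ ⊔ U = ⊤ := by
  refine eq_top_iff.mpr fun v _ => ?_
  obtain ⟨u, hu, w, hw, rfl⟩ := Submodule.mem_sup.mp (hUW ▸ Submodule.mem_top : v ∈ U ⊔ W)
  have hsplit : u + w = (w + φ ⟨w, hw⟩) + (u - φ ⟨w, hw⟩) := by abel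
  rw [hsplit]
  exact Submodule.add_mem_sup ⟨⟨w, hw⟩, rfl⟩ (sub_mem hu (φ _).2)

theorem disjoint_orthogonal_internalGraph (hnd : LinearMap.SeparatingRight F) (hUW : U ⊔ W = ⊤)
    (hU : ∀ u ∈ U, ∀ u' ∈ U, F u u' = 0) (φ : W →ₗ[k] U) :
    Disjoint (F.orthogonal (internalGraph φ)) U := by
  refine Submodule.disjoint_def.mpr fun u hG hu =>
    Submodule.disjoint_def.mp (disjoint_orthogonal_of_sup_eq_top hnd hUW hU) u hu fun w hw => ?_
  simpa [hU _ (φ _).2 u hu] using hG _ ⟨⟨w, hw⟩, rfl⟩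

theorem internalGraph_le_orthogonal_iff (φ : W →ₗ[k] U) :
    internalGraph φ ≤ F.orthogonal (internalGraph φ) ↔
      ∀ w w' : W, F (w + φ w) (w' + φ w') = 0 := by
  refine ⟨fun h w w' => h ⟨w', rfl⟩ _ ⟨w, rfl⟩, ?_⟩
  rintro h _ ⟨w', rfl⟩ _ ⟨w, rfl⟩
  exact h w w'

theorem internalGraph_eq_orthogonal_iff_le (hnd : LinearMap.SeparatingRight F) (hUW : U ⊔ W = ⊤)
    (hU : ∀ u ∈ U, ∀ u' ∈ U, F u u' = 0) (φ : W →ₗ[k] U) :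
    internalGraph φ = F.orthogonal (internalGraph φ) ↔
      internalGraph φ ≤ F.orthogonal (internalGraph φ) := by
  refine ⟨le_of_eq, fun hiso => eq_of_le_of_inf_le_of_sup_le (z := U) hiso ?_ ?_⟩
  · rw [(disjoint_orthogonal_internalGraph hnd hUW hU φ).eq_bot]
    exact bot_le
  · rw [internalGraph_sup_eq_top hUW]
    exact le_top

end

theorem graphSubspace_lagrangian_iff_skew_general
    {k V : Type*} [Field k] [AddCommGroup V] [Module k V]
    (F : LinearMap.BilinForm k V) (hsymm : F.IsSymm) (hnd : F.Nondegenerate)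
    (U W : Submodule k V) (hUW : IsCompl U W)
    (hU : ∀ u ∈ U, ∀ u' ∈ U, F u u' = 0)
    (hW : ∀ w ∈ W, ∀ w' ∈ W, F w w' = 0)
    (t : U ⊗[k] U) :
    graphSubspace F U W t = F.orthogonal (graphSubspace F U W t) ↔
      t + (TensorProduct.comm k U U) t = 0 := by
  change internalGraph (tensorToHom F U W t) = F.orthogonal (internalGraph _) ↔ _
  rw [internalGraph_eq_orthogonal_iff_le hnd.2 hUW.sup_eq_top hU, internalGraph_le_orthogonal_iff]
  simp_rw [apply_add_tensorToHom hsymm hU hW]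
  exact forall_apply_tensorToHom_eq_zero_iff hnd.2 hUW.sup_eq_top hU _

/-- For a Lagrangian decomposition `V = U ⊕ W` and `t ∈ U ⊗ U`, the subspace
`W_t` is Lagrangian (`W_t = W_t^⊥`) if and only if `t` is skew-symmetric
(`t + t²¹ = 0`, i.e. `t ∈ Λ²U`). -/
theorem graphSubspace_lagrangian_iff_skew
    {k V : Type*} [Field k] [AddCommGroup V] [Module k V]
    (hchar : (2 : k) ≠ 0)
    (F : LinearMap.BilinForm k V) (hsymm : F.IsSymm) (hnd : F.Nondegenerate)
    (U W : Submodule k V) (hUW : IsCompl U W)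
    (hU : ∀ u ∈ U, ∀ u' ∈ U, F u u' = 0)
    (hW : ∀ w ∈ W, ∀ w' ∈ W, F w w' = 0)
    (t : U ⊗[k] U) :
    graphSubspace F U W t = F.orthogonal (graphSubspace F U W t) ↔
      t + (TensorProduct.comm k U U) t = 0 :=
  graphSubspace_lagrangian_iff_skew_general F hsymm hnd U W hUW hU hW t
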